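/- arXiv:2512.15459 — 4 statements merged into one kernel-verified Lean document; each statement's English description precedes it below -/
import Mathlib

section
/- Let p ∈ [0,1], θ ∈ [0,1], and let η₁, η₂, η₃, ζ, γ_h, μ_h, μ_r, δ_h, δ_r be nonnegative reals satisfying μ_h + γ_h + (1−θ)δ_h ≥ min{μ_h, μ_r} + min{δ_h, δ_r}. Let S_h, I_h, Q_h, I_r, S_r, N_h, N_r be positive reals with S_h ≤ N_h and S_r ≤ N_r. Then [(1−p)(η₁ I_r + η₂ I_h) S_h / N_h − (μ_h + δ_h + ζ) I_h + ζ I_h − (μ_h + γ_h + (1−θ)δ_h) Q_h + η₃ S_r I_r / N_r − (μ_r + δ_r) I_r] / (I_h + Q_h + I_r) ≤ (1−p)(η₁ + η₂) + η₃ − (min{μ_h, μ_r} + min{δ_h, δ_r}). -/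
/-- Key drift bound in the extinction theorem (Theorem 4.1): the generator of
`log (I_h + Q_h + I_r)` is bounded by a state-independent expression. -/
theorem extinction_drift_bound
    (p θ η1 η2 η3 ζ γh μh μr δh δr : ℝ)
    (hp : p ∈ Set.Icc (0:ℝ) 1) (hθ : θ ∈ Set.Icc (0:ℝ) 1)
    (hη1 : 0 ≤ η1) (hη2 : 0 ≤ η2) (hη3 : 0 ≤ η3) (hζ : 0 ≤ ζ)
    (hγh : 0 ≤ γh) (hμh : 0 ≤ μh) (hμr : 0 ≤ μr) (hδh : 0 ≤ δh) (hδr : 0 ≤ δr)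
    (hQcoef : min μh μr + min δh δr ≤ μh + γh + (1 - θ) * δh)
    (Sh Ih Qh Ir Sr Nh Nr : ℝ)
    (hSh : 0 < Sh) (hIh : 0 < Ih) (hQh : 0 < Qh) (hIr : 0 < Ir)
    (hSr : 0 < Sr) (hNh : 0 < Nh) (hNr : 0 < Nr)
    (hShNh : Sh ≤ Nh) (hSrNr : Sr ≤ Nr) :
    ((1 - p) * (η1 * Ir + η2 * Ih) * Sh / Nh - (μh + δh + ζ) * Ih
        + ζ * Ih - (μh + γh + (1 - θ) * δh) * Qh
        + η3 * Sr * Ir / Nr - (μr + δr) * Ir) / (Ih + Qh + Ir)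
      ≤ (1 - p) * (η1 + η2) + η3 - (min μh μr + min δh δr) := by
  have hp1 : 0 ≤ 1 - p := by linarith [hp.2]
  have hD : 0 < Ih + Qh + Ir := by linarith
  rw [div_le_iff₀ hD]
  have h1 : (1 - p) * (η1 * Ir + η2 * Ih) * Sh / Nh ≤ (1 - p) * (η1 * Ir + η2 * Ih) := by
    rw [div_le_iff₀ hNh]
    have ha : 0 ≤ (1 - p) * (η1 * Ir + η2 * Ih) := by positivity
    nlinarith
  have h2 : η3 * Sr * Ir / Nr ≤ η3 * Ir := by
    rw [div_le_iff₀ hNr]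
    have : 0 ≤ η3 * Ir := by positivity
    nlinarith
  have m1 : min μh μr ≤ μh := min_le_left _ _
  have m2 : min μh μr ≤ μr := min_le_right _ _
  have m3 : min δh δr ≤ δh := min_le_left _ _
  have m4 : min δh δr ≤ δr := min_le_right _ _
  nlinarith [mul_le_mul_of_nonneg_right hQcoef hQh.le,
    mul_le_mul_of_nonneg_right (add_le_add m1 m3) hIh.le,
    mul_le_mul_of_nonneg_right (add_le_add m2 m4) hIr.le,
    mul_nonneg (mul_nonneg hp1 hη1) hIh.le,
    mul_nonneg (mul_nonneg hp1 hη2) hIr.le,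
    mul_nonneg (mul_nonneg hp1 (add_nonneg hη1 hη2)) hQh.le,
    mul_nonneg hη3 hIh.le, mul_nonneg hη3 hQh.le]
end

section
/- Let T₀ ≥ 0, let g : [T₀,∞) → ℝ be measurable with 0 ≤ g(s) ≤ 1 for all s, and let a > 0, C ≥ 0. If ∫_{T₀}^t g(s) ds ≥ a(t−T₀) − C for all t ≥ T₀, then ∫_{T₀}^t g(s)² ds ≥ a²(t−T₀) − 2aC for all t ≥ T₀. -/
open MeasureTheory

/-- Quantitative Cauchy–Schwarz step in Lemma 5.4: a linear-in-time lower bound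
on the running integral of a `[0,1]`-valued function transfers to its square. -/
theorem running_integral_sq_lower_bound
    (T0 a C : ℝ) (hT0 : 0 ≤ T0) (ha : 0 < a) (hC : 0 ≤ C)
    (g : ℝ → ℝ) (hg_meas : Measurable g)
    (hg : ∀ s, T0 ≤ s → 0 ≤ g s ∧ g s ≤ 1)
    (hint : ∀ t ≥ T0, a * (t - T0) - C ≤ ∫ s in T0..t, g s) :
    ∀ t ≥ T0, a ^ 2 * (t - T0) - 2 * a * C ≤ ∫ s in T0..t, (g s) ^ 2 := by
  intro t ht
  have hInt_g : IntervalIntegrable g volume T0 t := by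
    rw [intervalIntegrable_iff_integrableOn_Ioc_of_le ht]
    apply Integrable.mono' (integrable_const (1 : ℝ)) hg_meas.aestronglyMeasurable
    filter_upwards [ae_restrict_mem measurableSet_Ioc] with s hs
    have := hg s hs.1.le
    rw [Real.norm_eq_abs, abs_le]; constructor <;> linarith [this.1, this.2]
  have hInt_g2 : IntervalIntegrable (fun s => (g s) ^ 2) volume T0 t := by
    rw [intervalIntegrable_iff_integrableOn_Ioc_of_le ht]
    apply Integrable.mono' (integrable_const (1 : ℝ))
      ((hg_meas.pow_const 2).aestronglyMeasurable)
    filter_upwards [ae_restrict_mem measurableSet_Ioc] with s hs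
    have := hg s hs.1.le
    rw [Real.norm_eq_abs, abs_le]; constructor <;> nlinarith [this.1, this.2]
  have hInt_lin : IntervalIntegrable (fun s => 2 * a * g s - a ^ 2) volume T0 t :=
    ((hInt_g.const_mul (2 * a)).sub (intervalIntegrable_const (c := a ^ 2)))
  have hmono : (∫ s in T0..t, (2 * a * g s - a ^ 2)) ≤ ∫ s in T0..t, (g s) ^ 2 := by
    apply intervalIntegral.integral_mono_on ht hInt_lin hInt_g2
    intro s _
    nlinarith [sq_nonneg (g s - a)]
  have hcalc : (∫ s in T0..t, (2 * a * g s - a ^ 2))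
      = 2 * a * (∫ s in T0..t, g s) - a ^ 2 * (t - T0) := by
    rw [intervalIntegral.integral_sub (hInt_g.const_mul (2 * a)) intervalIntegrable_const,
      intervalIntegral.integral_const_mul, intervalIntegral.integral_const, smul_eq_mul]
    ring
  have h1 := hint t ht
  nlinarith [hmono, hcalc]
end

section
/- Let T₀ ≥ 0, let g : [T₀,∞) → ℝ be measurable with 0 ≤ g(s) ≤ 1 for all s, and let a ∈ (0,1], C ≥ 0. If ∫_{T₀}^t g(s) ds ≥ a(t−T₀) − C for all t ≥ T₀, then ∫_{T₀}^t g(s)³ ds ≥ a³(t−T₀) − 3a²C for all t ≥ T₀. -/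
open MeasureTheory

/-- Quantitative Jensen step in Lemma 5.4: a linear-in-time lower bound on the
running integral of a `[0,1]`-valued function transfers to its cube. -/
theorem running_integral_cube_lower_bound
    (T0 a C : ℝ) (hT0 : 0 ≤ T0) (ha : 0 < a) (ha1 : a ≤ 1) (hC : 0 ≤ C)
    (g : ℝ → ℝ) (hg_meas : Measurable g)
    (hg : ∀ s, T0 ≤ s → 0 ≤ g s ∧ g s ≤ 1)
    (hint : ∀ t ≥ T0, a * (t - T0) - C ≤ ∫ s in T0..t, g s) :
    ∀ t ≥ T0, a ^ 3 * (t - T0) - 3 * a ^ 2 * C ≤ ∫ s in T0..t, (g s) ^ 3 := by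
  intro t ht
  have hbd : ∀ᵐ s ∂(volume.restrict (Set.Ioc T0 t)), ‖g s‖ ≤ 1 := by
    filter_upwards [ae_restrict_mem measurableSet_Ioc] with s hs
    rcases hg s hs.1.le with ⟨h0, h1⟩
    rw [Real.norm_eq_abs, abs_le]; constructor <;> linarith
  have hbd3 : ∀ᵐ s ∂(volume.restrict (Set.Ioc T0 t)), ‖g s ^ 3‖ ≤ 1 := by
    filter_upwards [ae_restrict_mem measurableSet_Ioc] with s hs
    rcases hg s hs.1.le with ⟨h0, h1⟩
    rw [Real.norm_eq_abs, abs_le]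
    refine ⟨by nlinarith [pow_nonneg h0 3], pow_le_one₀ h0 h1⟩
  have hfin : volume (Set.Ioc T0 t) ≠ ⊤ := by
    simp [Real.volume_Ioc]
  have hInt : IntervalIntegrable g volume T0 t := by
    rw [intervalIntegrable_iff_integrableOn_Ioc_of_le ht]
    exact Measure.integrableOn_of_bounded hfin hg_meas.aestronglyMeasurable hbd
  have hInt3 : IntervalIntegrable (fun s => g s ^ 3) volume T0 t := by
    rw [intervalIntegrable_iff_integrableOn_Ioc_of_le ht]
    exact Measure.integrableOn_of_bounded hfin (hg_meas.pow_const 3).aestronglyMeasurable hbd3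
  have key : ∫ s in T0..t, (3 * a ^ 2 * g s - 2 * a ^ 3) ≤ ∫ s in T0..t, g s ^ 3 := by
    apply intervalIntegral.integral_mono_on ht
      ((hInt.const_mul _).sub intervalIntegrable_const) hInt3
    intro s hs
    rcases hg s hs.1 with ⟨h0, h1⟩
    nlinarith [mul_nonneg (sq_nonneg (g s - a)) (by linarith : (0:ℝ) ≤ g s + 2 * a)]
  have hval : ∫ s in T0..t, (3 * a ^ 2 * g s - 2 * a ^ 3)
      = 3 * a ^ 2 * (∫ s in T0..t, g s) - 2 * a ^ 3 * (t - T0) := by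
    rw [intervalIntegral.integral_sub (hInt.const_mul _) intervalIntegrable_const,
      intervalIntegral.integral_const_mul, intervalIntegral.integral_const]
    simp [smul_eq_mul]; ring
  have h1 := hint t ht
  have h2 : 3 * a ^ 2 * (a * (t - T0) - C) ≤ 3 * a ^ 2 * (∫ s in T0..t, g s) :=
    mul_le_mul_of_nonneg_left h1 (by positivity)
  nlinarith [key, hval]
end

section
/- Let T₀ ≥ 0, let r : [T₀,∞) → ℝ be measurable with 0 ≤ r(s) ≤ 1 for all s, let μ ≥ 0, σ ≥ 0, a ∈ (0,1], C ≥ 0, and suppose ∫_{T₀}^t r(s) ds ≥ a(t−T₀) − C for all t ≥ T₀. Then for all t ≥ T₀, ∫_{T₀}^t (μ r(s)² + σ²(r(s)³ − r(s)²)) ds ≥ (μ a² + σ²(a³ − 1))(t−T₀) − (2aCμ + 3a²Cσ²). -/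
open MeasureTheory

/-- Combined quantitative lower bound used in the ratio estimate (Lemma 5.4)
for the drift of the susceptible fraction `r`. -/
theorem drift_integral_lower_bound
    (T0 μ σ a C : ℝ) (hT0 : 0 ≤ T0) (hμ : 0 ≤ μ) (hσ : 0 ≤ σ)
    (ha : 0 < a) (ha1 : a ≤ 1) (hC : 0 ≤ C)
    (r : ℝ → ℝ) (hr_meas : Measurable r)
    (hr : ∀ s, T0 ≤ s → 0 ≤ r s ∧ r s ≤ 1)
    (hint : ∀ t ≥ T0, a * (t - T0) - C ≤ ∫ s in T0..t, r s) :
    ∀ t ≥ T0,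
      (μ * a ^ 2 + σ ^ 2 * (a ^ 3 - 1)) * (t - T0)
          - (2 * a * C * μ + 3 * a ^ 2 * C * σ ^ 2)
        ≤ ∫ s in T0..t, (μ * (r s) ^ 2 + σ ^ 2 * ((r s) ^ 3 - (r s) ^ 2)) := by
  intro t ht
  set K := 2*a*μ + 3*a^2*σ^2 with hKdef
  set D := μ*a^2 + 2*a^3*σ^2 + σ^2 with hDdef
  have hbound : ∀ s ∈ Set.Ioc T0 t, ‖r s‖ ≤ 1 := by
    intro s hs
    obtain ⟨h0, h1⟩ := hr s hs.1.le
    rw [Real.norm_eq_abs, abs_le]; constructor <;> linarith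
  have hrint : IntervalIntegrable r volume T0 t := by
    rw [intervalIntegrable_iff_integrableOn_Ioc_of_le ht]
    exact Measure.integrableOn_of_bounded measure_Ioc_lt_top.ne
      hr_meas.aestronglyMeasurable
      (ae_restrict_of_forall_mem measurableSet_Ioc hbound)
  have hfmeas : Measurable fun s => μ * (r s) ^ 2 + σ ^ 2 * ((r s) ^ 3 - (r s) ^ 2) := by
    fun_prop
  have hfint : IntervalIntegrable
      (fun s => μ * (r s) ^ 2 + σ ^ 2 * ((r s) ^ 3 - (r s) ^ 2)) volume T0 t := by
    rw [intervalIntegrable_iff_integrableOn_Ioc_of_le ht]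
    have habs : ∀ s ∈ Set.Ioc T0 t,
        ‖μ * (r s) ^ 2 + σ ^ 2 * ((r s) ^ 3 - (r s) ^ 2)‖ ≤ μ + σ^2 := by
      intro s hs
      obtain ⟨h0, h1⟩ := hr s hs.1.le
      have h2 : (r s)^2 ≤ 1 := by nlinarith
      have h3 : (r s)^3 ≤ (r s)^2 := by nlinarith
      have h2' : 0 ≤ (r s)^2 := sq_nonneg _
      have h3' : 0 ≤ (r s)^3 := by positivity
      have e1 : μ * (r s)^2 ≤ μ * 1 := mul_le_mul_of_nonneg_left h2 hμ
      have e1' : 0 ≤ μ * (r s)^2 := mul_nonneg hμ h2'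
      have e2 : σ^2 * ((r s)^3 - (r s)^2) ≤ σ^2 * 1 :=
        mul_le_mul_of_nonneg_left (by linarith) (sq_nonneg σ)
      have e2' : σ^2 * (-1) ≤ σ^2 * ((r s)^3 - (r s)^2) :=
        mul_le_mul_of_nonneg_left (by linarith) (sq_nonneg σ)
      rw [Real.norm_eq_abs, abs_le]
      constructor <;> nlinarith [sq_nonneg σ]
    exact Measure.integrableOn_of_bounded measure_Ioc_lt_top.ne
      hfmeas.aestronglyMeasurable
      (ae_restrict_of_forall_mem measurableSet_Ioc habs)
  have hgint : IntervalIntegrable (fun s => K * r s - D) volume T0 t :=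
    (hrint.const_mul K).sub intervalIntegrable_const
  have hmono : (∫ s in T0..t, (K * r s - D))
      ≤ ∫ s in T0..t, (μ * (r s) ^ 2 + σ ^ 2 * ((r s) ^ 3 - (r s) ^ 2)) := by
    apply intervalIntegral.integral_mono_on ht hgint hfint
    intro s hs
    obtain ⟨h0, h1⟩ := hr s hs.1
    have key : 0 ≤ μ*(r s - a)^2 + σ^2*(r s - a)^2*(r s + 2*a) + σ^2*(1 - (r s)^2) := by
      have k1 := mul_nonneg hμ (sq_nonneg (r s - a))
      have k2 := mul_nonneg (mul_nonneg (sq_nonneg σ) (sq_nonneg (r s - a)))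
        (by linarith : (0:ℝ) ≤ r s + 2*a)
      have k3 := mul_nonneg (sq_nonneg σ) (by nlinarith : (0:ℝ) ≤ 1 - (r s)^2)
      rw [mul_assoc] at k2
      linarith
    have expand : μ * (r s)^2 + σ^2 * ((r s)^3 - (r s)^2) - (K * r s - D)
        = μ*(r s - a)^2 + σ^2*(r s - a)^2*(r s + 2*a) + σ^2*(1 - (r s)^2) := by
      simp only [hKdef, hDdef]; ring
    linarith
  have hcomp : (∫ s in T0..t, (K * r s - D))
      = K * (∫ s in T0..t, r s) - D * (t - T0) := by
    rw [intervalIntegral.integral_sub (hrint.const_mul K) intervalIntegrable_const,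
      intervalIntegral.integral_const_mul, intervalIntegral.integral_const,
      smul_eq_mul]
    ring
  have hI := hint t ht
  have hK0 : 0 ≤ K := by positivity
  have hKI := mul_le_mul_of_nonneg_left hI hK0
  have heq : (μ * a ^ 2 + σ ^ 2 * (a ^ 3 - 1)) * (t - T0)
      - (2 * a * C * μ + 3 * a ^ 2 * C * σ ^ 2)
      = K * (a * (t - T0) - C) - D * (t - T0) := by
    simp only [hKdef, hDdef]; ring
  rw [hcomp] at hmono
  linarith
end
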